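/- arXiv:1612.05459 — 3 statements merged into one kernel-verified Lean document; each statement's English description precedes it below -/
import Mathlib

section
/- Let $\Omega = (-a,a)^d$, let $w_2 \in L^\infty(\Omega^2,\mathbb{R})$, and let $v_1 : \Omega^2 \to \mathbb{C}$ be measurable such that for some $\varepsilon > 0$ both $\operatorname{esssup}_{x}\|v_1(x,\cdot)\|_{L^{2+\varepsilon}(\Omega)} < \infty$ and $\operatorname{esssup}_{y}\|v_1(\cdot,y)\|_{L^{2+4/\varepsilon}(\Omega)} < \infty$. Then for every $z \in \mathbb{R}$ with $\operatorname{dist}(z, \operatorname{essran}(w_2)) > 0$, the kernel $K(x,y;z) := -\frac{1}{2} \frac{v_1(x,y)\, \overline{v_1(y,x)}}{w_2(x,y) - z}$ belongs to $L^2(\Omega^2)$, i.e., the associated integral operator on $L^2(\Omega)$ is Hilbert–Schmidt. -/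
open MeasureTheory ENNReal

/-- The essential range of a measurable real-valued function with respect to a measure. -/
def essRange {α : Type*} [MeasurableSpace α] (μ : Measure α) (f : α → ℝ) : Set ℝ :=
  {c : ℝ | ∀ δ > 0, μ {x | |f x - c| < δ} ≠ 0}

/-!
Since `1/(2+ε) + 1/(2+4/ε) = 1/2`, Hölder's inequality puts `v₁(x,y) · conj v₁(y,x)` in
`L²(Ω²)`: the two factors lie in `L^{2+ε}(Ω²)` and `L^{2+4/ε}(Ω²)` by Tonelli, because their
slice norms are essentially bounded and `Ω` has finite measure. Almost every value of `w₂` lies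
in its essential range, so `|w₂ - z| ≥ dist(z, essran w₂) > 0` a.e., and `K` is dominated by a
constant multiple of that product.
-/

lemma ENNReal.holderTriple_ofReal {p q r : ℝ} (hp : 0 < p) (hq : 0 < q)
    (h : p⁻¹ + q⁻¹ = r⁻¹) :
    HolderTriple (ENNReal.ofReal p) (ENNReal.ofReal q) (ENNReal.ofReal r) := by
  have hr : 0 < r := inv_pos.1 (h ▸ by positivity)
  constructor
  rw [← ofReal_inv_of_pos hp, ← ofReal_inv_of_pos hq, ← ofReal_inv_of_pos hr,
    ← ofReal_add (by positivity) (by positivity), h]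

theorem memLp_uncurry_of_essSup_eLpNorm_lt_top {α β E : Type*} [MeasurableSpace α]
    [MeasurableSpace β] [NormedAddCommGroup E] {μ : Measure α} {ν : Measure β}
    [IsFiniteMeasure μ] [SFinite ν] {f : α → β → E} {p : ℝ≥0∞} (hp0 : p ≠ 0) (hp : p ≠ ∞)
    (hf : AEStronglyMeasurable (Function.uncurry f) (μ.prod ν))
    (h : essSup (fun x => eLpNorm (f x) p ν) μ < ∞) :
    MemLp (Function.uncurry f) p (μ.prod ν) := by
  refine ⟨hf, (eLpNorm_lt_top_iff_lintegral_rpow_enorm_lt_top hp0 hp).2 ?_⟩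
  set S := essSup (fun x => eLpNorm (f x) p ν) μ
  calc ∫⁻ z, ‖Function.uncurry f z‖ₑ ^ p.toReal ∂(μ.prod ν)
      = ∫⁻ x, ∫⁻ y, ‖f x y‖ₑ ^ p.toReal ∂ν ∂μ := lintegral_prod _ (hf.enorm.pow_const _)
    _ = ∫⁻ x, eLpNorm (f x) p ν ^ p.toReal ∂μ := by
      simp_rw [eLpNorm_eq_eLpNorm' hp0 hp,
        lintegral_rpow_enorm_eq_rpow_eLpNorm' (toReal_pos hp0 hp)]
    _ ≤ ∫⁻ _, S ^ p.toReal ∂μ :=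
      lintegral_mono_ae <| (ae_le_essSup _).mono fun x hx => by gcongr
    _ < ∞ := by
      rw [lintegral_const]
      exact mul_lt_top (rpow_lt_top_of_nonneg toReal_nonneg h.ne) (measure_lt_top _ _)

lemma essRange_eq_support_map {α : Type*} [MeasurableSpace α] {μ : Measure α} {f : α → ℝ}
    (hf : Measurable f) : essRange μ f = (μ.map f).support := by
  ext c
  simp only [Metric.nhds_basis_ball.mem_measureSupport, Measure.map_apply hf measurableSet_ball,
    pos_iff_ne_zero, essRange, Set.mem_ofPred_eq, Set.preimage, Metric.mem_ball, Real.dist_eq]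

lemma ae_mem_essRange {α : Type*} [MeasurableSpace α] {μ : Measure α} {f : α → ℝ}
    (hf : Measurable f) : ∀ᵐ x ∂μ, f x ∈ essRange μ f := by
  rw [essRange_eq_support_map hf]
  exact ae_of_ae_map hf.aemeasurable Measure.support_mem_ae

lemma ae_infDist_essRange_le {α : Type*} [MeasurableSpace α] {μ : Measure α} {f : α → ℝ}
    (hf : Measurable f) (c : ℝ) : ∀ᵐ x ∂μ, Metric.infDist c (essRange μ f) ≤ |f x - c| := by
  filter_upwards [ae_mem_essRange hf] with x hx
  simpa [Real.dist_eq, abs_sub_comm] using Metric.infDist_le_dist_of_mem (x := c) hx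

lemma Complex.norm_div_ofReal_sub_le {u : ℂ} {w z D : ℝ} (hD : 0 < D) (h : D ≤ |w - z|) :
    ‖u / ((w : ℂ) - z)‖ ≤ D⁻¹ * ‖u‖ := by
  rw [norm_div, ← ofReal_sub, norm_real, Real.norm_eq_abs, div_eq_inv_mul]
  gcongr

theorem schur_kernel_HilbertSchmidt_general (d : ℕ) (a ε : ℝ) (hε : 0 < ε)
    (Ω : Set (Fin d → ℝ)) (hΩ : Ω = Set.univ.pi fun _ => Set.Ioo (-a) a)
    (μ : Measure (Fin d → ℝ)) (hμ : μ = volume.restrict Ω)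
    (w₂ : (Fin d → ℝ) × (Fin d → ℝ) → ℝ)
    (hw₂meas : Measurable w₂)
    (v₁ : (Fin d → ℝ) → (Fin d → ℝ) → ℂ)
    (hv₁meas : Measurable (Function.uncurry v₁))
    (hv₁x : essSup (fun x => eLpNorm (v₁ x) (ENNReal.ofReal (2 + ε)) μ) μ < ⊤)
    (hv₁y : essSup (fun y => eLpNorm (fun x => v₁ x y) (ENNReal.ofReal (2 + 4 / ε)) μ) μ < ⊤)
    (z : ℝ) (hz : 0 < Metric.infDist z (essRange (μ.prod μ) w₂))
    (K : (Fin d → ℝ) × (Fin d → ℝ) → ℂ)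
    (hK : K = fun p => -(1 / 2) * (v₁ p.1 p.2 * (starRingEnd ℂ) (v₁ p.2 p.1)) /
        ((w₂ p : ℂ) - (z : ℂ))) :
    MemLp K 2 (μ.prod μ) := by
  have : IsFiniteMeasure μ := by
    subst hμ hΩ
    exact isFiniteMeasure_restrict.2 (by simp [volume_pi_pi, Real.volume_Ioo])
  have : HolderTriple (ENNReal.ofReal (2 + ε)) (ENNReal.ofReal (2 + 4 / ε)) 2 := by
    simpa using ENNReal.holderTriple_ofReal (r := 2) (by positivity) (by positivity)
      (by field_simp; ring)
  have hv : Measurable fun p : (Fin d → ℝ) × (Fin d → ℝ) => v₁ p.1 p.2 := hv₁meas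
  have hv_swap : Measurable fun p : (Fin d → ℝ) × (Fin d → ℝ) => v₁ p.2 p.1 :=
    hv₁meas.comp measurable_swap
  have hrow : MemLp (fun p => v₁ p.1 p.2) (ENNReal.ofReal (2 + ε)) (μ.prod μ) :=
    memLp_uncurry_of_essSup_eLpNorm_lt_top (by positivity) ofReal_ne_top
      hv.aestronglyMeasurable hv₁x
  have hcol : MemLp (fun p => v₁ p.2 p.1) (ENNReal.ofReal (2 + 4 / ε)) (μ.prod μ) :=
    memLp_uncurry_of_essSup_eLpNorm_lt_top (f := fun y x => v₁ x y) (by positivity)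
      ofReal_ne_top hv_swap.aestronglyMeasurable hv₁y
  have hprod : MemLp (fun p => v₁ p.1 p.2 * starRingEnd ℂ (v₁ p.2 p.1)) 2 (μ.prod μ) :=
    hcol.star.mul' hrow
  subst hK
  exact (hprod.const_mul (-(1 / 2))).of_le_mul (by fun_prop : Measurable _).aestronglyMeasurable <|
    (ae_infDist_essRange_le hw₂meas z).mono fun p hp => Complex.norm_div_ofReal_sub_le hz hp

theorem schur_kernel_HilbertSchmidt (d : ℕ) (a ε : ℝ) (ha : 0 < a) (hε : 0 < ε)
    (Ω : Set (Fin d → ℝ)) (hΩ : Ω = Set.univ.pi fun _ => Set.Ioo (-a) a)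
    (μ : Measure (Fin d → ℝ)) (hμ : μ = volume.restrict Ω)
    (w₂ : (Fin d → ℝ) × (Fin d → ℝ) → ℝ)
    (hw₂meas : Measurable w₂)
    (hw₂bdd : ∃ M : ℝ, ∀ᵐ p ∂(μ.prod μ), |w₂ p| ≤ M)
    (v₁ : (Fin d → ℝ) → (Fin d → ℝ) → ℂ)
    (hv₁meas : Measurable (Function.uncurry v₁))
    (hv₁x : essSup (fun x => eLpNorm (v₁ x) (ENNReal.ofReal (2 + ε)) μ) μ < ⊤)
    (hv₁y : essSup (fun y => eLpNorm (fun x => v₁ x y) (ENNReal.ofReal (2 + 4 / ε)) μ) μ < ⊤)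
    (z : ℝ) (hz : 0 < Metric.infDist z (essRange (μ.prod μ) w₂))
    (K : (Fin d → ℝ) × (Fin d → ℝ) → ℂ)
    (hK : K = fun p => -(1 / 2) * (v₁ p.1 p.2 * (starRingEnd ℂ) (v₁ p.2 p.1)) /
        ((w₂ p : ℂ) - (z : ℂ))) :
    MemLp K 2 (μ.prod μ) :=
  schur_kernel_HilbertSchmidt_general d a ε hε Ω hΩ μ hμ w₂ hw₂meas v₁ hv₁meas hv₁x hv₁y z hz K hK
end

section
/- Let $\mathcal{A} = \begin{pmatrix} A & B \\ B^* & D \end{pmatrix}$ be a bounded self-adjoint operator on $\mathcal{H}_1 \oplus \mathcal{H}_2$ and let $z < \min \sigma_{ess}(\mathcal{A})$ with $z < \min\sigma(D)$. Let $S(z) = A - z - B(D-z)^{-1}B^*$ denote the Schur complement. Then the number of eigenvalues of $\mathcal{A}$ below $z$ (counted with multiplicity) equals the number of negative eigenvalues of $S(z)$: $N(z;\mathcal{A}) = N(0; S(z))$. -/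
open ContinuousLinearMap

/-- The essential spectrum of a bounded operator: the intersection of the spectra of all
its compact perturbations (Weyl's characterization). -/
noncomputable def essSpectrum {H : Type*} [NormedAddCommGroup H] [NormedSpace ℂ H]
    (T : H →L[ℂ] H) : Set ℂ :=
  ⋂ K ∈ {K : H →L[ℂ] H | IsCompactOperator K}, spectrum ℂ (T + K)

/-- The number of negative eigenvalues (dimension of the spectral subspace for `(-∞,0)`) of a
bounded self-adjoint operator, expressed variationally as the supremum of the dimensions of
subspaces on which the quadratic form is negative definite. -/
noncomputable def negCount {H : Type*} [NormedAddCommGroup H] [InnerProductSpace ℂ H]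
    (T : H →L[ℂ] H) : Cardinal :=
  ⨆ L : {L : Submodule ℂ H // ∀ u ∈ L, u ≠ 0 → ((inner ℂ (T u) u : ℂ)).re < 0},
    Module.rank ℂ L.1

universe u

/-!
Completing the square in the second component gives, for `u = (x, y)` and
`w = (D - z)⁻¹ B* x + y`, the form-level Frobenius–Schur factorization
`⟪(𝒜 - z) u, u⟫ = ⟪S(z) x, x⟫ + ⟪(D - z) w, w⟫`, and `D - z ≥ 0`.
Hence the projection `(x, y) ↦ x` carries subspaces on which `𝒜 - z` is negative definite
injectively onto subspaces on which `S(z)` is, and the graph map `x ↦ (x, -(D - z)⁻¹ B* x)`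
(on which `w = 0`) does the converse; as `negCount` is variational, both inequalities follow.
-/

open WithLp

section negCount

variable {H K : Type u} [NormedAddCommGroup H] [InnerProductSpace ℂ H]
  [NormedAddCommGroup K] [InnerProductSpace ℂ K]

theorem negCount_le_of_re_inner_le {T : H →L[ℂ] H} {S : K →L[ℂ] K} (g : H →ₗ[ℂ] K)
    (hg : ∀ u, (inner ℂ (S (g u)) (g u)).re ≤ (inner ℂ (T u) u).re) :
    negCount T ≤ negCount S := by
  refine ciSup_le' fun ⟨M, hM⟩ => ?_
  have hinj : Function.Injective (g ∘ₗ M.subtype) := by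
    refine LinearMap.ker_eq_bot.mp <| LinearMap.ker_eq_bot'.mpr fun ⟨m, hm⟩ hgm => ?_
    by_contra hm0
    have := hg m
    simp only [LinearMap.coe_comp, Submodule.coe_subtype, Function.comp_apply] at hgm
    rw [hgm, map_zero, inner_zero_left, Complex.zero_re] at this
    exact (hM m hm fun h => hm0 (by simp [h])).not_ge this
  have hrank : Module.rank ℂ M = Module.rank ℂ (M.map g) := by
    rw [← rank_range_of_injective _ hinj, LinearMap.range_comp, Submodule.range_subtype]
  refine le_ciSup_of_le Cardinal.bddAbove_of_small ⟨M.map g, ?_⟩ hrank.le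
  rintro _ ⟨m, hm, rfl⟩ hgm
  exact (hg m).trans_lt (hM m hm fun h => hgm (by simp [h]))

end negCount

section spectrum

variable {A : Type*}

theorem spectrum_sub_smul_one_re_pos [Ring A] [Algebra ℂ A] {a : A} {z : ℂ}
    (h : ∀ w ∈ spectrum ℂ a, z.re < w.re) : ∀ w ∈ spectrum ℂ (a - z • 1), 0 < w.re := by
  rw [← Algebra.algebraMap_eq_smul_one, ← spectrum.sub_singleton_eq]
  rintro _ ⟨w, hw, _, rfl, rfl⟩
  simpa using h w hw

theorem isUnit_of_forall_spectrum_re_pos [Ring A] [Algebra ℂ A] {a : A}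
    (h : ∀ w ∈ spectrum ℂ a, 0 < w.re) : IsUnit a :=
  spectrum.zero_notMem_iff ℂ |>.mp fun h0 => (h 0 h0).false

theorem IsSelfAdjoint.nonneg_of_forall_spectrum_re_nonneg [CStarAlgebra A] [PartialOrder A]
    [StarOrderedRing A] {a : A} (ha : IsSelfAdjoint a) (h : ∀ w ∈ spectrum ℂ a, 0 ≤ w.re) :
    0 ≤ a := by
  rw [StarOrderedRing.nonneg_iff_spectrum_nonneg (R := ℝ) a ha]
  intro x hx
  simpa using h _ (spectrum.algebraMap_mem ℂ hx)

end spectrum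

section block

variable {H₁ H₂ : Type*} [NormedAddCommGroup H₁] [InnerProductSpace ℂ H₁]
  [NormedAddCommGroup H₂] [InnerProductSpace ℂ H₂]

theorem inner_apply_self_of_block {𝒜 : WithLp 2 (H₁ × H₂) →L[ℂ] WithLp 2 (H₁ × H₂)}
    {A : H₁ →L[ℂ] H₁} {B : H₂ →L[ℂ] H₁} {C : H₁ →L[ℂ] H₂} {D : H₂ →L[ℂ] H₂}
    (h𝒜 : ∀ u, ofLp (𝒜 u) = (A (ofLp u).1 + B (ofLp u).2, C (ofLp u).1 + D (ofLp u).2))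
    (u : WithLp 2 (H₁ × H₂)) :
    inner ℂ (𝒜 u) u = inner ℂ (A (ofLp u).1) (ofLp u).1 + inner ℂ (B (ofLp u).2) (ofLp u).1
      + inner ℂ (C (ofLp u).1) (ofLp u).2 + inner ℂ (D (ofLp u).2) (ofLp u).2 := by
  rw [prod_inner_apply, h𝒜, inner_add_left, inner_add_left]
  ring

theorem ofLp_sub_smul_one_apply_of_block {𝒜 : WithLp 2 (H₁ × H₂) →L[ℂ] WithLp 2 (H₁ × H₂)}
    {A : H₁ →L[ℂ] H₁} {B : H₂ →L[ℂ] H₁} {C : H₁ →L[ℂ] H₂} {D : H₂ →L[ℂ] H₂}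
    (h𝒜 : ∀ u, ofLp (𝒜 u) = (A (ofLp u).1 + B (ofLp u).2, C (ofLp u).1 + D (ofLp u).2))
    (z : ℂ) (u : WithLp 2 (H₁ × H₂)) :
    ofLp ((𝒜 - z • 1) u) = ((A - z • 1) (ofLp u).1 + B (ofLp u).2,
      C (ofLp u).1 + (D - z • 1) (ofLp u).2) := by
  simp only [sub_apply, smul_apply, ofLp_sub, ofLp_smul, h𝒜, Prod.ext_iff,
    Prod.fst_sub, Prod.snd_sub, Prod.smul_fst, Prod.smul_snd]
  constructor <;> abel

variable [CompleteSpace H₁] [CompleteSpace H₂]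

theorem inner_block_eq_inner_schur_add (A : H₁ →L[ℂ] H₁) (B : H₂ →L[ℂ] H₁) {E : H₂ →L[ℂ] H₂}
    (hE : IsSelfAdjoint E) (hEu : IsUnit E) (x : H₁) (y : H₂) :
    inner ℂ (A x) x + inner ℂ (B y) x + inner ℂ (adjoint B x) y + inner ℂ (E y) y =
      inner ℂ ((A - B ∘L Ring.inverse E ∘L adjoint B) x) x +
        inner ℂ (E (Ring.inverse E (adjoint B x) + y)) (Ring.inverse E (adjoint B x) + y) := by
  have hr : E (Ring.inverse E (adjoint B x)) = adjoint B x := by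
    rw [← mul_apply_eq_comp, Ring.mul_inverse_cancel E hEu, one_apply_eq_self]
  simp only [sub_apply, comp_apply, map_add, inner_add_left, inner_add_right, inner_sub_left]
  generalize Ring.inverse E (adjoint B x) = r at hr ⊢
  have hEsymm : ∀ a b, inner ℂ (E a) b = inner ℂ a (E b) := hE.isSymmetric
  rw [← adjoint_inner_right B r x, ← adjoint_inner_right B y x, ← hr, hEsymm r r, hEsymm y r]
  ring

end block

theorem eigenvalue_count_schur_complement_general
    (H₁ H₂ : Type u)
    [NormedAddCommGroup H₁] [InnerProductSpace ℂ H₁] [CompleteSpace H₁]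
    [NormedAddCommGroup H₂] [InnerProductSpace ℂ H₂] [CompleteSpace H₂]
    (A : H₁ →L[ℂ] H₁) (B : H₂ →L[ℂ] H₁) (D : H₂ →L[ℂ] H₂)
    (hD : IsSelfAdjoint D)
    (eF : WithLp 2 (H₁ × H₂) ≃L[ℂ] H₁ × H₂)
    (heF : eF = WithLp.prodContinuousLinearEquiv 2 ℂ H₁ H₂)
    (𝒜 : WithLp 2 (H₁ × H₂) →L[ℂ] WithLp 2 (H₁ × H₂))
    (h𝒜 : ∀ u, eF (𝒜 u) = (A (eF u).1 + B (eF u).2, adjoint B (eF u).1 + D (eF u).2))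
    (z : ℝ)
    (hzD : ∀ w ∈ spectrum ℂ D, z < w.re)
    (S : H₁ →L[ℂ] H₁)
    (hS : S = A - (z : ℂ) • (1 : H₁ →L[ℂ] H₁) -
      B ∘L Ring.inverse (D - (z : ℂ) • (1 : H₂ →L[ℂ] H₂)) ∘L adjoint B) :
    negCount (𝒜 - (z : ℂ) • (1 : WithLp 2 (H₁ × H₂) →L[ℂ] WithLp 2 (H₁ × H₂))) =
      negCount S := by
  subst heF
  replace h𝒜 : ∀ u, ofLp (𝒜 u) = (A (ofLp u).1 + B (ofLp u).2,
      adjoint B (ofLp u).1 + D (ofLp u).2) := h𝒜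
  set E := D - (z : ℂ) • (1 : H₂ →L[ℂ] H₂)
  have hEspec : ∀ w ∈ spectrum ℂ E, 0 < w.re :=
    spectrum_sub_smul_one_re_pos fun w hw => by simpa using hzD w hw
  have hEsa : IsSelfAdjoint E := hD.sub (.smul (Complex.conj_ofReal z) (.one _))
  have hEpos : ∀ v, 0 ≤ (inner ℂ (E v) v).re :=
    ((nonneg_iff_isPositive E).mp <| hEsa.nonneg_of_forall_spectrum_re_nonneg
      fun w hw => (hEspec w hw).le).re_inner_nonneg_left
  have hform : ∀ u, inner ℂ ((𝒜 - (z : ℂ) • 1) u) u = inner ℂ (S (ofLp u).1) (ofLp u).1 +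
      inner ℂ (E (Ring.inverse E (adjoint B (ofLp u).1) + (ofLp u).2))
        (Ring.inverse E (adjoint B (ofLp u).1) + (ofLp u).2) := fun u => by
    rw [hS, inner_apply_self_of_block (ofLp_sub_smul_one_apply_of_block h𝒜 z),
      inner_block_eq_inner_schur_add _ _ hEsa (isUnit_of_forall_spectrum_re_pos hEspec)]
  apply le_antisymm
  · refine negCount_le_of_re_inner_le (fstₗ 2 ℂ H₁ H₂) fun u => ?_
    rw [hform, Complex.add_re]
    exact le_add_of_nonneg_right (hEpos _)
  · let graph : H₁ →ₗ[ℂ] WithLp 2 (H₁ × H₂) :=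
      (WithLp.linearEquiv 2 ℂ (H₁ × H₂)).symm.toLinearMap ∘ₗ
        .prod .id (-(Ring.inverse E ∘L adjoint B).toLinearMap)
    refine negCount_le_of_re_inner_le graph fun x => ?_
    rw [hform]
    simp [graph]

theorem eigenvalue_count_schur_complement
    (H₁ H₂ : Type u)
    [NormedAddCommGroup H₁] [InnerProductSpace ℂ H₁] [CompleteSpace H₁]
    [NormedAddCommGroup H₂] [InnerProductSpace ℂ H₂] [CompleteSpace H₂]
    (A : H₁ →L[ℂ] H₁) (B : H₂ →L[ℂ] H₁) (D : H₂ →L[ℂ] H₂)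
    (hA : IsSelfAdjoint A) (hD : IsSelfAdjoint D)
    (eF : WithLp 2 (H₁ × H₂) ≃L[ℂ] H₁ × H₂)
    (heF : eF = WithLp.prodContinuousLinearEquiv 2 ℂ H₁ H₂)
    (𝒜 : WithLp 2 (H₁ × H₂) →L[ℂ] WithLp 2 (H₁ × H₂))
    (h𝒜 : ∀ u, eF (𝒜 u) = (A (eF u).1 + B (eF u).2, adjoint B (eF u).1 + D (eF u).2))
    (z : ℝ)
    (hzess : ∀ w ∈ essSpectrum 𝒜, z < w.re)
    (hzD : ∀ w ∈ spectrum ℂ D, z < w.re)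
    (S : H₁ →L[ℂ] H₁)
    (hS : S = A - (z : ℂ) • (1 : H₁ →L[ℂ] H₁) -
      B ∘L Ring.inverse (D - (z : ℂ) • (1 : H₂ →L[ℂ] H₂)) ∘L adjoint B) :
    negCount (𝒜 - (z : ℂ) • (1 : WithLp 2 (H₁ × H₂) →L[ℂ] WithLp 2 (H₁ × H₂))) =
      negCount S :=
  eigenvalue_count_schur_complement_general H₁ H₂ A B D hD eF heF 𝒜 h𝒜 z hzD S hS
end

section
/- Let $\Delta$ be a bounded self-adjoint multiplication operator on $L^2(\Omega)$ with $\operatorname{essinf} \Delta > 0$, and let $K$ be a compact self-adjoint operator on $L^2(\Omega)$. Set $S = \Delta + K$ and $T = -\Delta^{-1/2} K \Delta^{-1/2}$. Then $T$ is compact self-adjoint, $\Delta^{-1/2} S \Delta^{-1/2} = I - T$, and the number of negative eigenvalues of $S$ equals the number of eigenvalues of $T$ greater than $1$: $N(0;S) = n(1;T)$. -/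
/-!
Multiplication by `Δ^{-1/2}` is a self-adjoint operator `B` with `B Δ B = 1`; in particular it is
bijective, and `B S B = 1 - T`. Hence `re ⟪S (B u), B u⟫ = ‖u‖² - re ⟪T u, u⟫`, so `B` maps the
subspaces on which `T > 1` bijectively and dimension-preservingly onto those on which `S < 0`:
this is Sylvester's law of inertia for the congruence by `B`.
-/

open MeasureTheory ContinuousLinearMap

/-- `countAbove T lam` : the dimension of the spectral subspace for `(lam,∞)` of a bounded
self-adjoint operator, expressed variationally. -/
noncomputable def countAbove {H : Type*} [NormedAddCommGroup H] [InnerProductSpace ℂ H]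
    (T : H →L[ℂ] H) (lam : ℝ) : Cardinal :=
  ⨆ L : {L : Submodule ℂ H // ∀ u ∈ L, u ≠ 0 → lam * ‖u‖ ^ 2 < ((inner ℂ (T u) u : ℂ)).re},
    Module.rank ℂ L.1

universe u v

theorem iSup_rank_eq_of_linearEquiv {R : Type u} {M N : Type v} [Semiring R]
    [AddCommMonoid M] [Module R M] [AddCommMonoid N] [Module R N] (e : M ≃ₗ[R] N)
    {P : M → Prop} {Q : N → Prop}
    (hPQ : ∀ u, P u ↔ Q (e u)) :
    ⨆ L : {L : Submodule R M // ∀ u ∈ L, u ≠ 0 → P u}, Module.rank R L.1 =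
      ⨆ L : {L : Submodule R N // ∀ u ∈ L, u ≠ 0 → Q u}, Module.rank R L.1 := by
  refine Equiv.iSup_congr ((Submodule.orderIsoMapComap e).toEquiv.subtypeEquiv fun L => ?_)
    fun L => e.rank_map_eq L.1
  change (∀ u ∈ L, u ≠ 0 → P u) ↔ ∀ v ∈ L.map (e : M →ₗ[R] N), v ≠ 0 → Q v
  constructor
  · rintro h _ ⟨u, hu, rfl⟩ hu0
    exact (hPQ u).1 (h u hu (by simpa using hu0))
  · intro h u hu hu0
    exact (hPQ u).2 (h _ ⟨u, hu, rfl⟩ (by simpa using hu0))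

theorem negCount_eq_countAbove_one_of_congruence {H : Type*} [NormedAddCommGroup H]
    [InnerProductSpace ℂ H] (S T B : H →L[ℂ] H) (hB : (B : H →ₗ[ℂ] H).IsSymmetric)
    (hBbij : Function.Bijective B) (hST : B ∘L S ∘L B = 1 - T) :
    negCount S = countAbove T 1 := by
  have hform : ∀ u, (inner ℂ (S (B u)) (B u)).re = ‖u‖ ^ 2 - (inner ℂ (T u) u).re := by
    intro u
    have hsymm : inner ℂ (B (S (B u))) u = inner ℂ (S (B u)) (B u) := hB _ _
    rw [← hsymm, show B (S (B u)) = (B ∘L S ∘L B) u from rfl, hST]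
    simp [← Complex.ofReal_pow]
  refine (iSup_rank_eq_of_linearEquiv (LinearEquiv.ofBijective (B : H →ₗ[ℂ] H) hBbij)
    fun u => ?_).symm
  simp only [LinearEquiv.ofBijective_apply, ContinuousLinearMap.coe_coe, hform]
  constructor <;> intro h <;> linarith

section MultiplicationOperator

variable {𝕜 : Type*} [RCLike 𝕜] {α : Type*} [MeasurableSpace α] {μ : Measure α}

theorem isSelfAdjoint_of_ae_eq_ofReal_mul (B : Lp 𝕜 2 μ →L[𝕜] Lp 𝕜 2 μ) (g : α → ℝ)
    (hB : ∀ f : Lp 𝕜 2 μ, (B f : α → 𝕜) =ᵐ[μ] fun x => (g x : 𝕜) * f x) :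
    IsSelfAdjoint B := by
  refine isSelfAdjoint_iff_isSymmetric.mpr fun f f' => ?_
  rw [coe_coe, L2.inner_def, L2.inner_def]
  refine integral_congr_ae ?_
  filter_upwards [hB f, hB f'] with x hf hf'
  rw [hf, hf', RCLike.inner_apply, RCLike.inner_apply, map_mul, RCLike.conj_ofReal]
  ring

theorem comp_ae_eq_mul {p : ENNReal} [Fact (1 ≤ p)] {B C : Lp 𝕜 p μ →L[𝕜] Lp 𝕜 p μ}
    {g h : α → 𝕜}
    (hB : ∀ f : Lp 𝕜 p μ, (B f : α → 𝕜) =ᵐ[μ] fun x => g x * f x)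
    (hC : ∀ f : Lp 𝕜 p μ, (C f : α → 𝕜) =ᵐ[μ] fun x => h x * f x) (f : Lp 𝕜 p μ) :
    ((B ∘L C) f : α → 𝕜) =ᵐ[μ] fun x => g x * h x * f x := by
  filter_upwards [hB (C f), hC f] with x hBx hCx
  rw [comp_apply, hBx, hCx, mul_assoc]

theorem eq_one_of_ae_eq_mul {p : ENNReal} [Fact (1 ≤ p)] {B : Lp 𝕜 p μ →L[𝕜] Lp 𝕜 p μ}
    {g : α → 𝕜}
    (hB : ∀ f : Lp 𝕜 p μ, (B f : α → 𝕜) =ᵐ[μ] fun x => g x * f x) (hg : ∀ᵐ x ∂μ, g x = 1) :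
    B = 1 := by
  ext f
  filter_upwards [hB f, hg] with x hBx hgx
  rw [hBx, hgx, one_mul, one_apply_eq_self]

end MultiplicationOperator

theorem Real.rpow_neg_half_mul_mul_rpow_neg_half {d : ℝ} (hd : 0 < d) :
    d ^ (-(1 / 2) : ℝ) * (d * d ^ (-(1 / 2) : ℝ)) = 1 := by
  rw [mul_left_comm, ← Real.rpow_add hd]
  norm_num [Real.rpow_neg_one, hd.ne']

theorem birman_schwinger_reduction_general
    {α : Type*} [MeasurableSpace α] (μ : Measure α)
    (Δ : α → ℝ)
    (c : ℝ) (hc : 0 < c) (hΔlow : ∀ᵐ x ∂μ, c ≤ Δ x)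
    (A Ai K : Lp ℂ 2 μ →L[ℂ] Lp ℂ 2 μ)
    (hA : ∀ f : Lp ℂ 2 μ, (A f : α → ℂ) =ᵐ[μ] fun x => (Δ x : ℂ) * f x)
    (hAi : ∀ f : Lp ℂ 2 μ, (Ai f : α → ℂ) =ᵐ[μ] fun x => ((Δ x ^ (-(1 / 2) : ℝ) : ℝ) : ℂ) * f x)
    (hK : IsCompactOperator K) (hKsa : IsSelfAdjoint K)
    (S T : Lp ℂ 2 μ →L[ℂ] Lp ℂ 2 μ)
    (hS : S = A + K) (hT : T = -(Ai ∘L K ∘L Ai)) :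
    IsCompactOperator T ∧ IsSelfAdjoint T ∧
      Ai ∘L S ∘L Ai = 1 - T ∧
      negCount S = countAbove T 1 := by
  have hAiSA : IsSelfAdjoint Ai := isSelfAdjoint_of_ae_eq_ofReal_mul Ai _ hAi
  have hAiAAi : Ai ∘L A ∘L Ai = 1 := by
    refine eq_one_of_ae_eq_mul (comp_ae_eq_mul hAi (comp_ae_eq_mul hA hAi)) ?_
    filter_upwards [hΔlow] with x hx
    exact_mod_cast Real.rpow_neg_half_mul_mul_rpow_neg_half (hc.trans_le hx)
  have hAiBij : Function.Bijective Ai :=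
    ⟨Function.LeftInverse.injective (g := Ai ∘L A) (DFunLike.congr_fun hAiAAi),
      fun f => ⟨A (Ai f), DFunLike.congr_fun hAiAAi f⟩⟩
  have hconj : Ai ∘L S ∘L Ai = 1 - T := by
    rw [hS, hT, add_comp, comp_add, hAiAAi, sub_neg_eq_add]
  refine ⟨hT ▸ ((hK.comp_clm Ai).clm_comp Ai).neg, hT ▸ (hKsa.conjugate_self hAiSA).neg, hconj,
    negCount_eq_countAbove_one_of_congruence S T Ai hAiSA.isSymmetric hAiBij hconj⟩

theorem birman_schwinger_reduction
    {α : Type*} [MeasurableSpace α] (μ : Measure α)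
    (Δ : α → ℝ) (hΔmeas : Measurable Δ)
    (c : ℝ) (hc : 0 < c) (hΔlow : ∀ᵐ x ∂μ, c ≤ Δ x)
    (M : ℝ) (hΔbdd : ∀ᵐ x ∂μ, Δ x ≤ M)
    (A Ai K : Lp ℂ 2 μ →L[ℂ] Lp ℂ 2 μ)
    (hA : ∀ f : Lp ℂ 2 μ, (A f : α → ℂ) =ᵐ[μ] fun x => (Δ x : ℂ) * f x)
    (hAi : ∀ f : Lp ℂ 2 μ, (Ai f : α → ℂ) =ᵐ[μ] fun x => ((Δ x ^ (-(1 / 2) : ℝ) : ℝ) : ℂ) * f x)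
    (hK : IsCompactOperator K) (hKsa : IsSelfAdjoint K)
    (S T : Lp ℂ 2 μ →L[ℂ] Lp ℂ 2 μ)
    (hS : S = A + K) (hT : T = -(Ai ∘L K ∘L Ai)) :
    IsCompactOperator T ∧ IsSelfAdjoint T ∧
      Ai ∘L S ∘L Ai = 1 - T ∧
      negCount S = countAbove T 1 :=
  birman_schwinger_reduction_general μ Δ c hc hΔlow A Ai K hA hAi hK hKsa S T hS hT
end
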